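/- arXiv:1103.4558 — 12 statements merged into one kernel-verified Lean document; each statement's English description precedes it below -/
import Mathlib

section
/- (Lemma 4, semantic form.) For every causal theory T with interpretation P and every family Q : ∀ i, β i → Prop, T†(Q) holds if and only if H(Q', Q̂') holds, where Q' i x := Q i x ∧ P i x and Q̂' i x := ¬Q i x ∧ ¬P i x. -/
/-- A semantic D-rule: a type `σ` of variable assignments, a body `B`, and
finite lists `PA`, `NA` of atoms, an atom being a pair of a predicate symbol
`i : ι` and a term function `σ → β i`. -/
structure DRule (ι : Type*) (β : ι → Type*) where
  σ : Type*
  B : σ → Prop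
  PA : List ((i : ι) × (σ → β i))
  NA : List ((i : ι) × (σ → β i))

/-- A causal theory: a finite family of semantic D-rules (the fixed
interpretation `P` is supplied separately). -/
abbrev CausalTheory (ι : Type*) (β : ι → Type*) := List (DRule ι β)

/-- `T†(Q)`: for every rule and every assignment satisfying the body, some atom
in `PA` holds under `Q` or some atom in `NA` fails under `Q`. -/
def Tdag {ι : Type*} {β : ι → Type*} (T : CausalTheory ι β)
    (Q : ∀ i, β i → Prop) : Prop :=
  ∀ r ∈ T, ∀ s : r.σ, r.B s →
    (∃ a ∈ r.PA, Q a.1 (a.2 s)) ∨ (∃ a ∈ r.NA, ¬ Q a.1 (a.2 s))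

/-- `H(Q,Q̂)` (relative to the fixed interpretation `P`). -/
def Hsem {ι : Type*} {β : ι → Type*} (T : CausalTheory ι β)
    (P Q Qh : ∀ i, β i → Prop) : Prop :=
  ∀ r ∈ T, ∀ s : r.σ, r.B s →
    (∃ a ∈ r.PA, (Qh a.1 (a.2 s) ∨ P a.1 (a.2 s)) → Q a.1 (a.2 s)) ∨
    (∃ a ∈ r.NA, (Q a.1 (a.2 s) ∨ ¬ P a.1 (a.2 s)) → Qh a.1 (a.2 s))

/-- `(Q,Q̂) ≤ (P,¬P)`. -/
def CTle {ι : Type*} {β : ι → Type*} (Q Qh P : ∀ i, β i → Prop) : Prop :=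
  (∀ i x, Q i x → P i x) ∧ (∀ i x, Qh i x → ¬ P i x)

/-- `(Q,Q̂) < (P,¬P)`. -/
def CTlt {ι : Type*} {β : ι → Type*} (Q Qh P : ∀ i, β i → Prop) : Prop :=
  CTle Q Qh P ∧ ¬ ((∀ i x, P i x → Q i x) ∧ (∀ i x, ¬ P i x → Qh i x))

/-- Lemma 4, semantic form: `T†(Q)` iff `H(Q',Q̂')` for the Σ1-substituted
families `Q' i x := Q i x ∧ P i x` and `Q̂' i x := ¬Q i x ∧ ¬P i x`. -/
theorem lemma4_semantic {ι : Type*} {β : ι → Type*} (T : CausalTheory ι β)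
    (P : ∀ i, β i → Prop) (Q : ∀ i, β i → Prop) :
    Tdag T Q ↔
      Hsem T P (fun i x => Q i x ∧ P i x) (fun i x => ¬ Q i x ∧ ¬ P i x) := by
  refine forall_congr' fun r => forall_congr' fun _ => forall_congr' fun s =>
    imp_congr_right fun _ => or_congr ?_ ?_ <;>
  exact exists_congr fun a => and_congr_right fun _ => by tauto
end

section
/- (Lemma 6, semantic form of the Σ2 substitution.) For all families Q, Q̂, P : ∀ i, β i → Prop, let C be the proposition '(Q,Q̂) ≤ (P,¬P)' and define V i x := ((C ∧ ¬Q i x ∧ ¬Q̂ i x) ↔ ¬P i x). Then (there exist i : ι and x : β i with ¬(V i x ↔ P i x)) if and only if (Q,Q̂) < (P,¬P). -/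
/-- Lemma 6, semantic form of the Σ2 substitution. -/
theorem lemma6_semantic {ι : Type*} {β : ι → Type*} (Q Qh P : ∀ i, β i → Prop) :
    (∃ (i : ι) (x : β i),
        ¬ ((((CTle Q Qh P) ∧ ¬ Q i x ∧ ¬ Qh i x) ↔ ¬ P i x) ↔ P i x)) ↔
      CTlt Q Qh P := by
  constructor
  · rintro ⟨i, x, h⟩
    by_cases hC : CTle Q Qh P
    · refine ⟨hC, fun ⟨h1, h2⟩ => h ?_⟩
      have := hC.1 i x
      have := hC.2 i x
      have := h1 i x
      have := h2 i x
      tauto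
    · exact absurd (by tauto) h
  · rintro ⟨hC, hns⟩
    rcases not_and_or.mp hns with h | h
    · push_neg at h
      obtain ⟨i, x, hP, hQ⟩ := h
      have := hC.2 i x
      exact ⟨i, x, by tauto⟩
    · push_neg at h
      obtain ⟨i, x, hP, hQh⟩ := h
      have := hC.1 i x
      exact ⟨i, x, by tauto⟩
end

section
/- (Lemma 7, semantic form.) For every causal theory T with interpretation P and all families Q, Q̂ : ∀ i, β i → Prop satisfying (Q,Q̂) ≤ (P,¬P), the following equivalence holds: T†(V) if and only if H(Q,Q̂), where C is the proposition '(Q,Q̂) ≤ (P,¬P)' and V i x := ((C ∧ ¬Q i x ∧ ¬Q̂ i x) ↔ ¬P i x). -/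
/-- Lemma 7, semantic form: if `(Q,Q̂) ≤ (P,¬P)` then `T†(V) ↔ H(Q,Q̂)`, where
`V i x := ((C ∧ ¬Q i x ∧ ¬Q̂ i x) ↔ ¬P i x)` with `C` the proposition
`(Q,Q̂) ≤ (P,¬P)`. -/
theorem lemma7_semantic {ι : Type*} {β : ι → Type*} (T : CausalTheory ι β)
    (P Q Qh : ∀ i, β i → Prop) (hle : CTle Q Qh P) :
    Tdag T (fun i x => ((CTle Q Qh P ∧ ¬ Q i x ∧ ¬ Qh i x) ↔ ¬ P i x)) ↔
      Hsem T P Q Qh := by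
  unfold Tdag Hsem
  refine forall_congr' fun r => forall_congr' fun _ => forall_congr' fun s =>
    imp_congr_right fun _ => or_congr ?_ ?_ <;>
  · refine exists_congr fun a => and_congr_right fun _ => ?_
    have h1 := hle.1 a.1 (a.2 s); have h2 := hle.2 a.1 (a.2 s)
    have : CTle Q Qh P := hle
    tauto
end

section
/- (Lemma 5, semantic form: stable models of the translation are models of the causal theory.) Let T be a causal theory with interpretation P. If T†(P) holds and for all families Q, Q̂ : ∀ i, β i → Prop with (Q,Q̂) < (P,¬P) the condition H(Q,Q̂) fails, then P is a model of T, i.e., for every family Q : ∀ i, β i → Prop, T†(Q) holds if and only if ∀ i x, Q i x ↔ P i x. -/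
/-- Lemma 5, semantic form: stable models of the translation are models of the
causal theory. -/
theorem lemma5_semantic {ι : Type*} {β : ι → Type*} (T : CausalTheory ι β)
    (P : ∀ i, β i → Prop)
    (hTP : Tdag T P)
    (hmin : ∀ Q Qh : ∀ i, β i → Prop, CTlt Q Qh P → ¬ Hsem T P Q Qh) :
    ∀ Q : ∀ i, β i → Prop, Tdag T Q ↔ (∀ i x, Q i x ↔ P i x) := by
  intro Q
  constructor
  · intro hTQ
    set Q' : ∀ i, β i → Prop := fun i x => Q i x ∧ P i x with hQ'
    set Qh : ∀ i, β i → Prop := fun i x => ¬ Q i x ∧ ¬ P i x with hQh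
    have hH : Hsem T P Q' Qh := by
      intro r hr s hB
      rcases hTQ r hr s hB with ⟨a, ha, hQa⟩ | ⟨a, ha, hQa⟩
      · exact Or.inl ⟨a, ha, fun h => ⟨hQa, h.elim (fun hh => absurd hQa hh.1) id⟩⟩
      · exact Or.inr ⟨a, ha, fun h => ⟨hQa, h.elim (fun hh => absurd hh.1 hQa) id⟩⟩
    have hle : CTle Q' Qh P := ⟨fun i x h => h.2, fun i x h => h.2⟩
    by_cases hlt : (∀ i x, P i x → Q' i x) ∧ (∀ i x, ¬ P i x → Qh i x)
    · intro i x
      constructor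
      · intro hq
        by_contra hp
        exact (hlt.2 i x hp).1 hq
      · intro hp
        exact (hlt.1 i x hp).1
    · exact absurd hH (hmin Q' Qh ⟨hle, hlt⟩)
  · intro hiff r hr s hB
    rcases hTP r hr s hB with ⟨a, ha, h⟩ | ⟨a, ha, h⟩
    · exact Or.inl ⟨a, ha, (hiff _ _).2 h⟩
    · exact Or.inr ⟨a, ha, fun hq => h ((hiff _ _).1 hq)⟩
end

section
/- (Lemma 8, semantic form: models of the causal theory are stable models of the translation.) Let T be a causal theory with interpretation P. If P is a model of T (i.e., for every family Q : ∀ i, β i → Prop, T†(Q) holds if and only if ∀ i x, Q i x ↔ P i x), then T†(P) holds and for all families Q, Q̂ : ∀ i, β i → Prop with (Q,Q̂) < (P,¬P), the condition H(Q,Q̂) fails. -/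
/-- Lemma 8, semantic form: models of the causal theory are stable models of
the translation. -/
theorem lemma8_semantic {ι : Type*} {β : ι → Type*} (T : CausalTheory ι β)
    (P : ∀ i, β i → Prop)
    (hmodel : ∀ Q : ∀ i, β i → Prop, Tdag T Q ↔ (∀ i x, Q i x ↔ P i x)) :
    Tdag T P ∧
      ∀ Q Qh : ∀ i, β i → Prop, CTlt Q Qh P → ¬ Hsem T P Q Qh := by
  constructor
  · exact (hmodel P).mpr (fun i x => Iff.rfl)
  · rintro Q Qh ⟨⟨hQP, hQhP⟩, hstrict⟩ hH
    set R : ∀ i, β i → Prop := fun i x => (Qh i x ∨ P i x) → Q i x with hR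
    have hTR : Tdag T R := by
      intro r hr s hB
      rcases hH r hr s hB with ⟨a, ha, h⟩ | ⟨a, ha, h⟩
      · exact Or.inl ⟨a, ha, h⟩
      · refine Or.inr ⟨a, ha, ?_⟩
        intro hRa
        by_cases hP : P a.1 (a.2 s)
        · have hnQh : ¬ Qh a.1 (a.2 s) := fun hq => hQhP _ _ hq hP
          have hQa : Q a.1 (a.2 s) := hRa (Or.inr hP)
          exact hnQh (h (Or.inl hQa))
        · exact hP (hQP _ _ (hRa (Or.inl (h (Or.inr hP)))))
    have hRP := (hmodel R).mp hTR
    apply hstrict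
    constructor
    · intro i x hP
      exact ((hRP i x).mpr hP) (Or.inr hP)
    · intro i x hnP
      by_contra hnQh
      exact hnP ((hRP i x).mp (fun h => by
        rcases h with h | h
        · exact absurd h hnQh
        · exact absurd h hnP))
end

section
/- (Soundness theorem, leading special case, semantic form.) Let T be a causal theory with interpretation P. Then P is a model of T (i.e., for every family Q : ∀ i, β i → Prop, T†(Q) holds if and only if ∀ i x, Q i x ↔ P i x) if and only if T†(P) holds and for all families Q, Q̂ : ∀ i, β i → Prop with (Q,Q̂) < (P,¬P), the condition H(Q,Q̂) fails. -/
/-- Soundness theorem, leading special case, semantic form: `P` is a model of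
`T` iff `T†(P)` holds and `H(Q,Q̂)` fails for all `(Q,Q̂) < (P,¬P)`. -/
theorem soundness_leading_case {ι : Type*} {β : ι → Type*} (T : CausalTheory ι β)
    (P : ∀ i, β i → Prop) :
    (∀ Q : ∀ i, β i → Prop, Tdag T Q ↔ (∀ i x, Q i x ↔ P i x)) ↔
      (Tdag T P ∧
        ∀ Q Qh : ∀ i, β i → Prop, CTlt Q Qh P → ¬ Hsem T P Q Qh) := by
  constructor
  · intro hmodel
    refine ⟨(hmodel P).mpr (fun i x => Iff.rfl), ?_⟩
    rintro Q Qh ⟨⟨hQP, hQhP⟩, hne⟩ hH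
    -- define R := Q ∨ (¬P ∧ ¬Qh)
    set R : ∀ i, β i → Prop := fun i x => Q i x ∨ (¬ P i x ∧ ¬ Qh i x) with hR
    have hTR : Tdag T R := by
      intro r hr s hB
      rcases hH r hr s hB with ⟨a, ha, h⟩ | ⟨a, ha, h⟩
      · refine Or.inl ⟨a, ha, ?_⟩
        by_cases hp : P a.1 (a.2 s)
        · exact Or.inl (h (Or.inr hp))
        · refine Or.inr ⟨hp, fun hqh => hp (hQP _ _ (h (Or.inl hqh)))⟩
      · refine Or.inr ⟨a, ha, ?_⟩
        rintro (hq | ⟨hp, hqh⟩)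
        · exact hQhP _ _ (h (Or.inl hq)) (hQP _ _ hq)
        · exact hqh (h (Or.inr hp))
    have hRP := (hmodel R).mp hTR
    refine hne ⟨fun i x hp => ?_, fun i x hp => ?_⟩
    · rcases (hRP i x).mpr hp with hq | ⟨hp', _⟩
      · exact hq
      · exact absurd hp hp'
    · by_contra hqh
      exact hp ((hRP i x).mp (Or.inr ⟨hp, hqh⟩))
  · rintro ⟨hTP, hmin⟩ Q
    constructor
    · intro hTQ
      set Q' : ∀ i, β i → Prop := fun i x => Q i x ∧ P i x with hQ'
      set Qh : ∀ i, β i → Prop := fun i x => ¬ Q i x ∧ ¬ P i x with hQh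
      have hH : Hsem T P Q' Qh := by
        intro r hr s hB
        rcases hTQ r hr s hB with ⟨a, ha, h⟩ | ⟨a, ha, h⟩
        · refine Or.inl ⟨a, ha, ?_⟩
          rintro (⟨hnq, _⟩ | hp)
          · exact absurd h hnq
          · exact ⟨h, hp⟩
        · refine Or.inr ⟨a, ha, ?_⟩
          rintro (⟨hq, _⟩ | hp)
          · exact absurd hq h
          · exact ⟨h, hp⟩
      have hle : CTle Q' Qh P := ⟨fun i x h => h.2, fun i x h => h.2⟩
      have := hmin Q' Qh
      have hkey : (∀ i x, P i x → Q' i x) ∧ (∀ i x, ¬ P i x → Qh i x) := by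
        by_contra hc
        exact hmin Q' Qh ⟨hle, hc⟩ hH
      intro i x
      constructor
      · intro hq
        by_contra hp
        exact (hkey.2 i x hp).1 hq
      · intro hp
        exact (hkey.1 i x hp).1
    · intro hQP
      intro r hr s hB
      rcases hTP r hr s hB with ⟨a, ha, h⟩ | ⟨a, ha, h⟩
      · exact Or.inl ⟨a, ha, (hQP _ _).mpr h⟩
      · exact Or.inr ⟨a, ha, fun hq => h ((hQP _ _).mp hq)⟩
end

section
/- (Lemma on translating L-rules, Heyting-algebra form.) In every Heyting algebra, for all elements a, b, g: (a ⇔ b)ᶜ ⊓ (g ⇨ a) = (a ⇔ b)ᶜ ⊓ ((g ⊓ (b ⊔ bᶜ)) ⇨ a). (Here a stands for the atom p(t), b for its companion p̂(t), g for the doubly negated body; the left side is the context ¬(p(t) ↔ p̂(t)), entailed by the completeness constraints, conjoined with tr_l of the rule, and the right side is the same context conjoined with tr_d of the rule.) -/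
/-- Lemma on translating L-rules, Heyting-algebra form: in the context of the
completeness constraint ¬(p(t) ↔ p̂(t)), the rule tr_l (here `g ⇨ a`) is
equivalent to the rule tr_d (here `(g ⊓ (b ⊔ bᶜ)) ⇨ a`). -/
theorem lrule_translation_heyting {α : Type*} [HeytingAlgebra α] (a b g : α) :
    (bihimp a b)ᶜ ⊓ (g ⇨ a) = (bihimp a b)ᶜ ⊓ ((g ⊓ (b ⊔ bᶜ)) ⇨ a) := by
  apply le_antisymm
  · refine inf_le_inf_left _ ?_
    rw [le_himp_iff]
    exact (inf_le_inf_left _ inf_le_left).trans himp_inf_le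
  · rw [le_inf_iff]
    refine ⟨inf_le_left, ?_⟩
    rw [le_himp_iff]
    set c := (bihimp a b)ᶜ with hc_def
    set H := (g ⊓ (b ⊔ bᶜ)) ⇨ a with hH_def
    -- H ⊓ g ≤ b ⇨ a
    have hba : H ⊓ g ≤ b ⇨ a := by
      rw [le_himp_iff, inf_assoc]
      exact (inf_le_inf_left _ (inf_le_inf_left _ le_sup_left)).trans himp_inf_le
    -- c ⊓ (b ⇨ a) ≤ bᶜ
    have hcb : c ⊓ (b ⇨ a) ≤ bᶜ := by
      rw [le_compl_iff_disjoint_right, disjoint_iff_inf_le]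
      calc c ⊓ (b ⇨ a) ⊓ b ≤ c ⊓ bihimp a b := by
            rw [inf_assoc]
            refine inf_le_inf_left _ ?_
            rw [bihimp_def]
            exact le_inf inf_le_left (inf_le_right.trans le_himp)
        _ ≤ ⊥ := by rw [hc_def]; exact disjoint_compl_left.le_bot
    -- bᶜ ⊓ (H ⊓ g) ≤ a
    have hfin : bᶜ ⊓ (H ⊓ g) ≤ a := by
      rw [inf_comm bᶜ, inf_assoc]
      exact (inf_le_inf_left _ (inf_le_inf_left _ le_sup_right)).trans himp_inf_le
    calc c ⊓ H ⊓ g = c ⊓ (H ⊓ g) := by rw [inf_assoc]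
      _ ≤ (c ⊓ (b ⇨ a)) ⊓ (H ⊓ g) :=
          le_inf (le_inf inf_le_left (inf_le_right.trans hba)) inf_le_right
      _ ≤ bᶜ ⊓ (H ⊓ g) := inf_le_inf_right _ hcb
      _ ≤ a := hfin
end

section
/- (Key intuitionistic entailment in the proof of the L-rule lemma.) In every Heyting algebra, for all elements a, b: (a ⇔ b)ᶜ ⊓ ((b ⊔ bᶜ) ⇨ a) ≤ bᶜ ⊓ a. (Intuitionistically: from ¬(A ↔ B) and ((B ∨ ¬B) → A) one can derive both ¬B and A; the derivation of ¬B uses Glivenko's theorem.) -/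
/-- Key intuitionistic entailment in the proof of the L-rule lemma:
from ¬(A ↔ B) and ((B ∨ ¬B) → A) one can derive both ¬B and A. -/
theorem lrule_key_entailment {α : Type*} [HeytingAlgebra α] (a b : α) :
    (bihimp a b)ᶜ ⊓ ((b ⊔ bᶜ) ⇨ a) ≤ bᶜ ⊓ a := by
  have hab : a ⊓ b ≤ bihimp a b := by
    rw [bihimp]
    exact le_inf (le_himp_iff.2 (by simp [inf_le_right])) (le_himp_iff.2 (by simp [inf_le_left]))
  have hb : (bihimp a b)ᶜ ⊓ ((b ⊔ bᶜ) ⇨ a) ≤ bᶜ := by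
    rw [le_compl_iff_disjoint_right, disjoint_iff_inf_le]
    calc (bihimp a b)ᶜ ⊓ ((b ⊔ bᶜ) ⇨ a) ⊓ b ≤ (bihimp a b)ᶜ ⊓ (a ⊓ b) := by
          refine le_inf (le_trans inf_le_left inf_le_left) (le_inf ?_ inf_le_right)
          calc (bihimp a b)ᶜ ⊓ ((b ⊔ bᶜ) ⇨ a) ⊓ b ≤ ((b ⊔ bᶜ) ⇨ a) ⊓ (b ⊔ bᶜ) := by
                refine le_inf (le_trans inf_le_left inf_le_right) (le_trans inf_le_right le_sup_left)
            _ ≤ a := by rw [inf_comm]; exact inf_himp_le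
      _ ≤ (bihimp a b)ᶜ ⊓ bihimp a b := inf_le_inf_left _ hab
      _ ≤ ⊥ := by simp
  refine le_inf hb ?_
  calc (bihimp a b)ᶜ ⊓ ((b ⊔ bᶜ) ⇨ a) ≤ (b ⊔ bᶜ) ⊓ ((b ⊔ bᶜ) ⇨ a) :=
        le_inf (hb.trans le_sup_right) inf_le_right
    _ ≤ a := inf_himp_le
end

section
/- (Core of the lemma on translating S-rules, same-sign case, Heyting-algebra form.) In every Heyting algebra, for all elements a₁, a₂, h₁, h₂, with e := (a₁ ⇔ h₁)ᶜ ⊓ (a₂ ⇔ h₂)ᶜ, b₁ := ((h₁ ⊔ h₁ᶜ) ⊓ (a₂ ⊔ a₂ᶜ)) ⇨ (a₁ ⊔ h₂), and b₂ := ((a₁ ⊔ a₁ᶜ) ⊓ (h₂ ⊔ h₂ᶜ)) ⇨ (h₁ ⊔ a₂): e ⊓ (a₁ ⇔ a₂) ⊓ (h₁ ⇔ h₂) = e ⊓ b₁ ⊓ b₂. (Here aᵢ stands for the atom Aᵢ and hᵢ for its companion Âᵢ; the equality expresses that under the completeness constraints the translation tr_s of a synonymity rule A₁ ↔ A₂ is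 intuitionistically equivalent to the translation tr_d of the corresponding pair of D-rules.) -/
/-!
Write `cᵢ := (aᵢ ⇔ hᵢ)ᶜ`. Intuitionistically, `cᵢ` already says that `aᵢ` and `hᵢ` exclude each
other and cannot both fail. Given the synonymies `a₁ ⇔ a₂` and `h₁ ⇔ h₂`, each D-rule follows by
cases on the two decided atoms of its premise; the one case no synonymy settles, `¬h₁ ∧ ¬a₂`,
makes both `a₂` and `h₂` fail, against `c₂`. Conversely `a₁ ⊢ a₂` needs only the second D-rule:
`a₁` refutes `h₁`, so whenever `h₂` is decided the rule yields `a₂`; then `h₂` would give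
`a₂ ∧ h₂`, against `c₂`, so `¬h₂` holds and the rule applies. The other three implications are
images of this one under exchanging the indices and exchanging each atom with its companion, two
symmetries that preserve both sides of the identity.
-/

open scoped symmDiff

theorem le_of_le_sup_of_inf_le {α : Type*} [DistribLattice α] {a b c x : α} (h : x ≤ a ⊔ b)
    (ha : x ⊓ a ≤ c) (hb : x ⊓ b ≤ c) : x ≤ c :=
  calc x = x ⊓ a ⊔ x ⊓ b := by rw [← inf_sup_left, inf_eq_left.2 h]
    _ ≤ c := sup_le ha hb

section HeytingAlgebra

variable {α : Type*} [HeytingAlgebra α] {a b x y : α}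

theorem le_of_le_of_le_compl (h : x ≤ a) (hc : x ≤ aᶜ) : x ≤ y :=
  (le_inf h hc).trans ((inf_compl_self a).le.trans bot_le)

theorem bihimp_inf_compl_le_compl (a b : α) : a ⇔ b ⊓ aᶜ ≤ bᶜ :=
  le_compl_iff_disjoint_right.2 <| disjoint_iff_inf_le.2 <|
    le_of_le_of_le_compl ((by order : _ ≤ a ⇔ b ⊓ b).trans (le_bihimp_inf_right a b)) (by order)

theorem compl_bihimp_inf_le_compl (a b : α) : (a ⇔ b)ᶜ ⊓ a ≤ bᶜ :=
  le_compl_iff_disjoint_right.2 <| disjoint_iff_inf_le.2 <|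
    le_of_le_of_le_compl ((by order : _ ≤ a ⊓ b).trans inf_le_bihimp) (by order)

theorem compl_inf_compl_le_bihimp (a b : α) : aᶜ ⊓ bᶜ ≤ a ⇔ b :=
  le_bihimp (le_of_le_of_le_compl inf_le_left (by order))
    (le_of_le_of_le_compl inf_le_left (by order))

variable {a₁ a₂ h₁ h₂ : α}

theorem le_decided_himp_of_le_bihimp (hc : x ≤ (a₂ ⇔ h₂)ᶜ) (ha : x ≤ a₁ ⇔ a₂)
    (hh : x ≤ h₁ ⇔ h₂) : x ≤ (h₁ ⊔ h₁ᶜ) ⊓ (a₂ ⊔ a₂ᶜ) ⇨ a₁ ⊔ h₂ := by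
  rw [le_himp_iff]
  set y := x ⊓ ((h₁ ⊔ h₁ᶜ) ⊓ (a₂ ⊔ a₂ᶜ))
  refine le_of_le_sup_of_inf_le (a := h₁) (b := h₁ᶜ) (by order) ?_ ?_
  · exact ((le_bihimp_inf_left h₁ h₂).trans' (by order)).trans le_sup_right
  refine le_of_le_sup_of_inf_le (a := a₂) (b := a₂ᶜ) (by order) ?_ ?_
  · exact ((le_bihimp_inf_right a₁ a₂).trans' (by order)).trans le_sup_left
  have hh₂ : y ⊓ h₁ᶜ ⊓ a₂ᶜ ≤ h₂ᶜ := (bihimp_inf_compl_le_compl h₁ h₂).trans' (by order)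
  exact le_of_le_of_le_compl ((compl_inf_compl_le_bihimp a₂ h₂).trans' (le_inf inf_le_right hh₂))
    (by order)

theorem le_himp_of_le_decided_himp (hc₁ : x ≤ (a₁ ⇔ h₁)ᶜ) (hc₂ : x ≤ (a₂ ⇔ h₂)ᶜ)
    (hb : x ≤ (a₁ ⊔ a₁ᶜ) ⊓ (h₂ ⊔ h₂ᶜ) ⇨ h₁ ⊔ a₂) : x ≤ a₁ ⇨ a₂ := by
  rw [le_himp_iff]
  have hh₁ : x ⊓ a₁ ≤ h₁ᶜ := (compl_bihimp_inf_le_compl a₁ h₁).trans' (by order)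
  have decided : ∀ z ≤ x ⊓ a₁, z ≤ h₂ ⊔ h₂ᶜ → z ≤ a₂ := fun z hz hd ↦ by
    have : z ≤ h₁ ⊔ a₂ :=
      himp_inf_le.trans' (le_inf (hz.trans (inf_le_left.trans hb)) (le_inf (by order) hd))
    exact le_of_le_sup_of_inf_le this (le_of_le_of_le_compl inf_le_right (by order)) inf_le_right
  have hh₂ : x ⊓ a₁ ≤ h₂ᶜ := le_compl_iff_disjoint_right.2 <| disjoint_iff_inf_le.2 <|
    le_of_le_of_le_compl ((le_inf (decided _ inf_le_left (by order)) inf_le_right).trans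
      inf_le_bihimp) (by order)
  exact decided _ le_rfl (hh₂.trans le_sup_right)

theorem le_bihimp_of_le_decided_himp (hc₁ : x ≤ (a₁ ⇔ h₁)ᶜ) (hc₂ : x ≤ (a₂ ⇔ h₂)ᶜ)
    (hb₁ : x ≤ (h₁ ⊔ h₁ᶜ) ⊓ (a₂ ⊔ a₂ᶜ) ⇨ a₁ ⊔ h₂)
    (hb₂ : x ≤ (a₁ ⊔ a₁ᶜ) ⊓ (h₂ ⊔ h₂ᶜ) ⇨ h₁ ⊔ a₂) : x ≤ a₁ ⇔ a₂ := by
  rw [inf_comm, sup_comm a₁] at hb₁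
  exact le_inf (le_himp_of_le_decided_himp hc₂ hc₁ hb₁) (le_himp_of_le_decided_himp hc₁ hc₂ hb₂)

end HeytingAlgebra

/-- Core of the lemma on translating S-rules, same-sign case: under the
completeness constraints, tr_s of a synonymity rule A₁ ↔ A₂ is intuitionistically
equivalent to tr_d of the corresponding pair of D-rules. -/
theorem srule_same_sign_heyting {α : Type*} [HeytingAlgebra α] (a₁ a₂ h₁ h₂ : α) :
    ((bihimp a₁ h₁)ᶜ ⊓ (bihimp a₂ h₂)ᶜ) ⊓ bihimp a₁ a₂ ⊓ bihimp h₁ h₂ =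
      ((bihimp a₁ h₁)ᶜ ⊓ (bihimp a₂ h₂)ᶜ) ⊓
        (((h₁ ⊔ h₁ᶜ) ⊓ (a₂ ⊔ a₂ᶜ)) ⇨ (a₁ ⊔ h₂)) ⊓
        (((a₁ ⊔ a₁ᶜ) ⊓ (h₂ ⊔ h₂ᶜ)) ⇨ (h₁ ⊔ a₂)) := by
  refine le_antisymm (le_inf (le_inf (by order) ?_) ?_) (le_inf (le_inf (by order) ?_) ?_)
  · exact le_decided_himp_of_le_bihimp (by order) (by order) (by order)
  · exact le_decided_himp_of_le_bihimp (bihimp_comm a₂ h₂ ▸ by order) (by order) (by order)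
  · exact le_bihimp_of_le_decided_himp (by order) (by order) (by order) (by order)
  · exact le_bihimp_of_le_decided_himp (h₁ := a₁) (h₂ := a₂)
      (bihimp_comm a₁ h₁ ▸ by order) (bihimp_comm a₂ h₂ ▸ by order) (by order) (by order)
end

section
/- (Right-to-left step in the proof of the S-rule lemma, via Glivenko's theorem.) In every Heyting algebra, for all elements a₁, a₂, h₁, h₂, with b₁ := ((h₁ ⊔ h₁ᶜ) ⊓ (a₂ ⊔ a₂ᶜ)) ⇨ (a₁ ⊔ h₂) and b₂ := ((a₁ ⊔ a₁ᶜ) ⊓ (h₂ ⊔ h₂ᶜ)) ⇨ (h₁ ⊔ a₂): (a₁ ⇔ h₁)ᶜ ⊓ (a₂ ⇔ h₂)ᶜ ⊓ b₁ ⊓ b₂ ⊓ a₁ ≤ a₂. (Intuitionistically: A₂ is derivable from ¬(A₁ ↔ Â₁), ¬(A₂ ↔ Â₂), (b1), (b2), and A₁.) -/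
private lemma srule_aux {α : Type*} [HeytingAlgebra α] {x a₁ a₂ h₁ h₂ : α}
    (H1 : x ≤ (bihimp a₁ h₁)ᶜ) (H2 : x ≤ (bihimp a₂ h₂)ᶜ)
    (Hb2 : x ≤ ((a₁ ⊔ a₁ᶜ) ⊓ (h₂ ⊔ h₂ᶜ)) ⇨ (h₁ ⊔ a₂)) (Ha1 : x ≤ a₁) : x ≤ a₂ := by
  have D1 : x ⊓ bihimp a₁ h₁ ≤ ⊥ := by
    rw [← himp_bot] at H1; exact le_himp_iff.mp H1
  have D2 : x ⊓ bihimp a₂ h₂ ≤ ⊥ := by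
    rw [← himp_bot] at H2; exact le_himp_iff.mp H2
  have hh1 : x ⊓ h₁ ≤ ⊥ :=
    le_trans (le_inf inf_le_left ((inf_le_inf Ha1 le_rfl).trans inf_le_bihimp)) D1
  have use_b2 : ∀ {y : α}, y ≤ x → y ≤ h₂ ⊔ h₂ᶜ → y ≤ a₂ := by
    intro y hyx hys
    have h1a2 : y ≤ h₁ ⊔ a₂ := by
      have := le_himp_iff.mp Hb2
      refine le_trans ?_ this
      exact le_inf hyx (le_inf (le_trans hyx (Ha1.trans le_sup_left)) hys)
    calc y ≤ y ⊓ (h₁ ⊔ a₂) := le_inf le_rfl h1a2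
      _ = (y ⊓ h₁) ⊔ (y ⊓ a₂) := inf_sup_left _ _ _
      _ ≤ a₂ := sup_le (((inf_le_inf hyx le_rfl).trans hh1).trans bot_le) inf_le_right
  have hh2a2 : x ⊓ h₂ ≤ a₂ := use_b2 inf_le_left (inf_le_right.trans le_sup_left)
  have himp32 : x ≤ h₂ ⇨ a₂ := le_himp_iff.mpr hh2a2
  have step4 : x ⊓ (a₂ ⇨ h₂) ≤ ⊥ := by
    rw [bihimp] at D2
    exact le_trans (le_inf inf_le_left (le_inf (inf_le_left.trans himp32) inf_le_right)) D2
  have step5 : x ⊓ h₂ ≤ ⊥ :=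
    le_trans (inf_le_inf_left x (le_himp_iff.mpr inf_le_left)) step4
  have hcomp : x ≤ h₂ᶜ := by rw [← himp_bot]; exact le_himp_iff.mpr step5
  exact use_b2 le_rfl (hcomp.trans le_sup_right)

/-- Right-to-left step in the proof of the S-rule lemma, via Glivenko's theorem:
A₂ is derivable from ¬(A₁ ↔ Â₁), ¬(A₂ ↔ Â₂), (b₁), (b₂), and A₁. -/
theorem srule_right_to_left {α : Type*} [HeytingAlgebra α] (a₁ a₂ h₁ h₂ : α) :
    (bihimp a₁ h₁)ᶜ ⊓ (bihimp a₂ h₂)ᶜ ⊓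
        (((h₁ ⊔ h₁ᶜ) ⊓ (a₂ ⊔ a₂ᶜ)) ⇨ (a₁ ⊔ h₂)) ⊓
        (((a₁ ⊔ a₁ᶜ) ⊓ (h₂ ⊔ h₂ᶜ)) ⇨ (h₁ ⊔ a₂)) ⊓ a₁ ≤ a₂ := by
  refine srule_aux (a₁ := a₁) (h₁ := h₁) (h₂ := h₂) ?_ ?_ ?_ ?_
  · exact inf_le_left.trans (inf_le_left.trans (inf_le_left.trans inf_le_left))
  · exact inf_le_left.trans (inf_le_left.trans (inf_le_left.trans inf_le_right))
  · exact inf_le_left.trans inf_le_right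
  · exact inf_le_right
end

section
/- (Example 2.) Let α be a type, a : α, and p : α → Prop. Then the condition 'for every predicate p' : α → Prop, (p' a ∧ ∀ x, ¬p x → ¬p' x) ↔ (∀ x, p' x ↔ p x)' holds if and only if ∀ x, p x ↔ x = a. (This verifies that the causal theory with rules p(a) ⇐ ⊤ and ¬p(x) ⇐ ¬p(x), with explainable symbol p, is equivalent to ∀x (p(x) ↔ x = a).) -/
/-- Example 2: the causal theory {p(a) ⇐ ⊤, ¬p(x) ⇐ ¬p(x)} with explainable
symbol p is equivalent to ∀x (p(x) ↔ x = a). -/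
theorem example2 {α : Type*} (a : α) (p : α → Prop) :
    (∀ p' : α → Prop, (p' a ∧ ∀ x, ¬ p x → ¬ p' x) ↔ (∀ x, p' x ↔ p x)) ↔
      (∀ x, p x ↔ x = a) := by
  constructor
  · intro H x
    have hpa : p a := by
      have := (H p).mpr (fun x => Iff.rfl)
      exact this.1
    have := (H (fun x => x = a)).mp ⟨rfl, fun x hx hxa => hx (hxa ▸ hpa)⟩
    exact (this x).symm
  · intro H p'
    constructor
    · rintro ⟨hpa, hcond⟩ x
      constructor
      · intro hx
        by_contra hpx
        exact hcond x hpx hx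
      · intro hx
        rw [(H x).mp hx]; exact hpa
    · intro h
      refine ⟨(h a).mpr ((H a).mpr rfl), fun x hpx hp'x => hpx ((h x).mp hp'x)⟩
end

section
/- (Example 4.) Let α be a type and p, q : α → Prop. Then the conjunction of (∀ x, ¬p x → (q x ∨ ¬q x)) with the condition 'there is no predicate q' : α → Prop such that (∀ x, q' x → q x), ¬(∀ x, q x → q' x), and ∀ x, ¬p x → (q' x ∨ ¬q x)' holds if and only if ¬∃ x, p x ∧ q x. (This computes the stable models of the choice rule {q(X)} :- not p(X) with q intensional: q is an arbitrary set disjoint from p.) -/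
/-- Example 4: SM_q[∀x(¬p(x) → (q(x) ∨ ¬q(x)))] says that q is an arbitrary
set disjoint from p. -/
theorem example4 {α : Type*} (p q : α → Prop) :
    ((∀ x, ¬ p x → (q x ∨ ¬ q x)) ∧
      ¬ ∃ q' : α → Prop, (∀ x, q' x → q x) ∧ ¬ (∀ x, q x → q' x) ∧
        (∀ x, ¬ p x → (q' x ∨ ¬ q x))) ↔
      ¬ ∃ x, p x ∧ q x := by
  constructor
  · rintro ⟨_, hno⟩ ⟨a, hpa, hqa⟩
    exact hno ⟨fun x => q x ∧ ¬ p x, fun x hx => hx.1,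
      fun h => (h a hqa).2 hpa,
      fun x hpx => (em (q x)).imp (fun hq => ⟨hq, hpx⟩) id⟩
  · intro hd
    refine ⟨fun x _ => em (q x), ?_⟩
    rintro ⟨q', hsub, hne, hmin⟩
    apply hne
    intro x hqx
    have hnp : ¬ p x := fun hp => hd ⟨x, hp, hqx⟩
    rcases hmin x hnp with h | h
    · exact h
    · exact absurd hqx h
end
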